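/- Let p > 2 and define φ : ℝ → ℝ by φ(t) = |t|^{p−2}·t / log(1+|t|) for t ≠ 0 and φ(0) = 0, and let Φ(t) = ∫₀ᵗ φ(r) dr. Then inf_{t>0} t·φ(t)/Φ(t) = p − 1. -/

import Mathlib

/-!
For `t > 0` we have `φ t = t ^ (p - 1) / log (1 + t)`, and `t / (1 + t) ≤ log (1 + t) ≤ t`.
The upper bound on the logarithm gives `φ t ≥ t ^ (p - 2)`, hence
`Φ t ≥ t ^ (p - 1) / (p - 1)`.
The lower bound gives `(t φ t)' = (p - t / ((1 + t) log (1 + t))) φ t ≥ (p - 1) φ t`, so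
`t φ t ≥ (p - 1) Φ t`, and also `t φ t ≤ (1 + t) t ^ (p - 1)`. Thus
`p - 1 ≤ t φ t / Φ t ≤ (p - 1) (1 + t)`, and the infimum `p - 1` is approached as
`t → 0⁺`.
-/

open Real Set Filter Topology

theorem le_of_hasDerivAt_le_of_le {f g f' g' : ℝ → ℝ} {a b : ℝ} (hab : a ≤ b)
    (hf : ContinuousOn f (Icc a b)) (hg : ContinuousOn g (Icc a b))
    (hf' : ∀ x ∈ Ioo a b, HasDerivAt f (f' x) x)
    (hg' : ∀ x ∈ Ioo a b, HasDerivAt g (g' x) x)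
    (hle : ∀ x ∈ Ioo a b, f' x ≤ g' x) (ha : f a ≤ g a) : f b ≤ g b := by
  have hmono : MonotoneOn (g - f) (Icc a b) := by
    refine monotoneOn_of_hasDerivWithinAt_nonneg (f' := g' - f') (convex_Icc a b) (hg.sub hf)
      (fun x hx => ?_) (fun x hx => ?_) <;> rw [interior_Icc] at hx
    · exact ((hg' x hx).sub (hf' x hx)).hasDerivWithinAt
    · exact sub_nonneg.2 (hle x hx)
  have := hmono (left_mem_Icc.2 hab) (right_mem_Icc.2 hab) hab
  simp only [Pi.sub_apply] at this
  linarith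

theorem isGLB_of_forall_le_of_tendsto {R u : ℝ → ℝ} {c : ℝ} (hlow : ∀ t > 0, c ≤ R t)
    (hup : ∀ t > 0, R t ≤ u t) (hu : Tendsto u (𝓝[>] 0) (𝓝 c)) :
    IsGLB {r | ∃ t > 0, r = R t} c := by
  refine ⟨fun r ⟨t, ht, hr⟩ => hr ▸ hlow t ht, fun b hb => ge_of_tendsto hu ?_⟩
  filter_upwards [self_mem_nhdsWithin] with t ht
  exact (hb ⟨t, ht, rfl⟩).trans (hup t ht)

theorem div_one_add_le_log_one_add {s : ℝ} (hs : 0 ≤ s) : s / (1 + s) ≤ log (1 + s) := by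
  have h := one_sub_inv_le_log_of_pos (show 0 < 1 + s by linarith)
  rwa [show 1 - (1 + s)⁻¹ = s / (1 + s) by field_simp; ring] at h

/-- At `t = 0` the formula gives `0 / log 1 = 0`, the prescribed value `φ 0`. -/
noncomputable def powDivLog (p t : ℝ) : ℝ := |t| ^ (p - 2) * t / log (1 + |t|)

section

variable {p : ℝ}

theorem powDivLog_of_pos {t : ℝ} (ht : 0 < t) : powDivLog p t = t ^ (p - 1) / log (1 + t) := by
  rw [powDivLog, abs_of_pos ht, ← rpow_add_one ht.ne']
  ring_nf

theorem abs_powDivLog_le (t : ℝ) : |powDivLog p t| ≤ |t| ^ (p - 2) * (1 + |t|) := by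
  rcases eq_or_ne t 0 with rfl | ht
  · rw [powDivLog, mul_zero, zero_div, abs_zero]
    positivity
  have habs : 0 < |t| := abs_pos.2 ht
  have hlog : 0 < log (1 + |t|) := log_pos (by linarith)
  rw [powDivLog, abs_div, abs_mul, abs_of_nonneg (rpow_nonneg habs.le _), abs_of_pos hlog,
    div_le_iff₀ hlog]
  have := div_one_add_le_log_one_add habs.le
  rw [div_le_iff₀ (by linarith)] at this
  have := rpow_nonneg habs.le (p - 2)
  nlinarith

theorem continuous_powDivLog (hp : 2 < p) : Continuous (powDivLog p) := by
  rw [continuous_iff_continuousAt]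
  intro x
  rcases eq_or_ne x 0 with rfl | hx
  · have hbound : Tendsto (fun t : ℝ => |t| ^ (p - 2) * (1 + |t|)) (𝓝 0) (𝓝 0) := by
      have : Continuous (fun t : ℝ => |t| ^ (p - 2) * (1 + |t|)) := by
        have := continuous_rpow_const (q := p - 2) (by linarith)
        fun_prop
      simpa [zero_rpow (by linarith : p - 2 ≠ 0)] using this.tendsto 0
    simpa [ContinuousAt, powDivLog] using squeeze_zero_norm abs_powDivLog_le hbound
  · have hlog : log (1 + |x|) ≠ 0 := (log_pos (by simpa using hx)).ne'
    unfold powDivLog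
    exact (((continuousAt_rpow_const _ _ (Or.inl (abs_ne_zero.2 hx))).comp
      continuous_abs.continuousAt).mul continuousAt_id).div
      ((continuousAt_log (by positivity)).comp (by fun_prop)) hlog

theorem rpow_sub_two_le_powDivLog {t : ℝ} (ht : 0 < t) : t ^ (p - 2) ≤ powDivLog p t := by
  have hlog : 0 < log (1 + t) := log_pos (by linarith)
  rw [powDivLog_of_pos ht, le_div_iff₀ hlog]
  calc t ^ (p - 2) * log (1 + t) ≤ t ^ (p - 2) * t := by
        gcongr
        exact (log_le_sub_one_of_pos (by linarith)).trans_eq (by ring)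
    _ = t ^ (p - 1) := by rw [← rpow_add_one ht.ne']; ring_nf

theorem mul_powDivLog_le {t : ℝ} (ht : 0 < t) : t * powDivLog p t ≤ (1 + t) * t ^ (p - 1) := by
  have hlog : 0 < log (1 + t) := log_pos (by linarith)
  have h := div_one_add_le_log_one_add ht.le
  rw [div_le_iff₀ (by linarith)] at h
  rw [powDivLog_of_pos ht, mul_div_assoc', div_le_iff₀ hlog]
  have := rpow_nonneg ht.le (p - 1)
  nlinarith

theorem hasDerivAt_mul_powDivLog {x : ℝ} (hx : 0 < x) :
    HasDerivAt (fun s => s * powDivLog p s)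
      ((p - x / ((1 + x) * log (1 + x))) * powDivLog p x) x := by
  have hlog : 0 < log (1 + x) := log_pos (by linarith)
  have hquot : HasDerivAt (fun s => s ^ p / log (1 + s))
      ((p * x ^ (p - 1) * log (1 + x) - x ^ p * (1 / (1 + x))) / log (1 + x) ^ 2) x :=
    (hasDerivAt_rpow_const (Or.inl hx.ne')).div
      (((hasDerivAt_id x).const_add 1).log (by simp; linarith)) hlog.ne'
  have heq : (fun s => s * powDivLog p s) =ᶠ[𝓝 x] fun s => s ^ p / log (1 + s) := by
    filter_upwards [eventually_gt_nhds hx] with s hs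
    rw [powDivLog_of_pos hs, mul_div_assoc', mul_comm, ← rpow_add_one hs.ne']
    ring_nf
  refine (hquot.congr_of_eventuallyEq heq).congr_deriv ?_
  rw [powDivLog_of_pos hx, show x ^ p = x ^ (p - 1) * x by rw [← rpow_add_one hx.ne']; ring_nf]
  field_simp

theorem rpow_div_le_integral_powDivLog (hp : 2 < p) {t : ℝ} (ht : 0 ≤ t) :
    t ^ (p - 1) / (p - 1) ≤ ∫ s in 0..t, powDivLog p s :=
  calc t ^ (p - 1) / (p - 1) = ∫ s in 0..t, s ^ (p - 2) := by
        rw [integral_rpow (Or.inl (by linarith)), show p - 2 + 1 = p - 1 by ring,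
          zero_rpow (by linarith), sub_zero]
    _ ≤ ∫ s in 0..t, powDivLog p s :=
        intervalIntegral.integral_mono_on_of_le_Ioo ht
          (intervalIntegral.intervalIntegrable_rpow' (by linarith))
          ((continuous_powDivLog hp).intervalIntegrable _ _)
          fun _ hs => rpow_sub_two_le_powDivLog hs.1

theorem sub_one_mul_integral_powDivLog_le (hp : 2 < p) {t : ℝ} (ht : 0 ≤ t) :
    (p - 1) * ∫ s in 0..t, powDivLog p s ≤ t * powDivLog p t := by
  have hc := continuous_powDivLog hp
  refine le_of_hasDerivAt_le_of_le (f := fun u => (p - 1) * ∫ s in 0..u, powDivLog p s)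
    (g := fun s => s * powDivLog p s) ht
    (continuous_const.mul (intervalIntegral.continuous_primitive
      (fun _ _ => hc.intervalIntegrable _ _) 0)).continuousOn
    (continuous_id.mul hc).continuousOn
    (fun x _ => (hc.integral_hasStrictDerivAt 0 x).hasDerivAt.const_mul (p - 1))
    (fun x hx => hasDerivAt_mul_powDivLog hx.1) (fun x ⟨hx, _⟩ => ?_) (by simp)
  have hlog : 0 < log (1 + x) := log_pos (by linarith)
  have hfrac : x / ((1 + x) * log (1 + x)) ≤ 1 := by
    rw [div_le_one (by positivity), ← div_le_iff₀' (by linarith)]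
    exact div_one_add_le_log_one_add hx.le
  have hφ : 0 ≤ powDivLog p x := (rpow_nonneg hx.le _).trans (rpow_sub_two_le_powDivLog hx)
  exact mul_le_mul_of_nonneg_right (by linarith) hφ

theorem integral_powDivLog_pos (hp : 2 < p) {t : ℝ} (ht : 0 < t) :
    0 < ∫ s in 0..t, powDivLog p s :=
  (div_pos (rpow_pos_of_pos ht _) (by linarith)).trans_le
    (rpow_div_le_integral_powDivLog hp ht.le)

theorem sub_one_le_mul_powDivLog_div_integral (hp : 2 < p) {t : ℝ} (ht : 0 < t) :
    p - 1 ≤ t * powDivLog p t / ∫ s in 0..t, powDivLog p s := by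
  rw [le_div_iff₀ (integral_powDivLog_pos hp ht)]
  exact sub_one_mul_integral_powDivLog_le hp ht.le

theorem mul_powDivLog_div_integral_le (hp : 2 < p) {t : ℝ} (ht : 0 < t) :
    t * powDivLog p t / ∫ s in 0..t, powDivLog p s ≤ (p - 1) * (1 + t) := by
  have hp1 : 0 < p - 1 := by linarith
  rw [div_le_iff₀ (integral_powDivLog_pos hp ht)]
  calc t * powDivLog p t ≤ (1 + t) * t ^ (p - 1) := mul_powDivLog_le ht
    _ = (p - 1) * (1 + t) * (t ^ (p - 1) / (p - 1)) := by field_simp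
    _ ≤ (p - 1) * (1 + t) * ∫ s in 0..t, powDivLog p s := by
        gcongr
        exact rpow_div_le_integral_powDivLog hp ht.le

end

/-- For φ(t) = |t|^{p−2}·t / log(1+|t|) (φ(0) = 0) with p > 2 and
Φ(t) = ∫₀ᵗ φ, one has inf_{t>0} t·φ(t)/Φ(t) = p − 1. -/
theorem stmt11 (p : ℝ) (hp : 2 < p) (φ Φ : ℝ → ℝ)
    (hφ : ∀ t : ℝ, t ≠ 0 → φ t = |t| ^ (p - 2) * t / Real.log (1 + |t|))
    (hφ0 : φ 0 = 0)
    (hΦ : ∀ t, Φ t = ∫ r in (0:ℝ)..t, φ r) :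
    IsGLB {r : ℝ | ∃ t > (0:ℝ), r = t * φ t / Φ t} (p - 1) := by
  obtain rfl : φ = powDivLog p := funext fun t => by
    rcases eq_or_ne t 0 with rfl | ht
    · simp [hφ0, powDivLog]
    · exact hφ t ht
  obtain rfl : Φ = fun t => ∫ s in 0..t, powDivLog p s := funext hΦ
  have hlim : Tendsto (fun t => (p - 1) * (1 + t)) (𝓝[>] 0) (𝓝 (p - 1)) :=
    ((continuous_const.mul (continuous_const.add continuous_id)).tendsto' 0 _
      (by simp)).mono_left nhdsWithin_le_nhds
  exact isGLB_of_forall_le_of_tendsto (fun t ht => sub_one_le_mul_powDivLog_div_integral hp ht)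
    (fun t ht => mul_powDivLog_div_integral_le hp ht) hlim
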